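/- Let φ₀ ∈ (−π, π) and φ₁ = −φ₀, so that δ = φ₁ − φ₀ = −2φ₀, and let g(A) = Y(2A, δ−A, φ₀). Then g(0) = 0, and g(A) ≠ 0 for every A with 0 < |A| < 2π. In other words, A = 0 is the unique solution of g(A) = 0 in the interval (−2π, 2π). -/

import Mathlib

/-!
Substituting `τ = s + 1/2`, the phase of `g(A)` becomes `A (s² - 1/4) - 2 φ₀ s`, so folding the
integral at `s = 0` gives `g(A) = -2 ∫₀^{1/2} sin (A (1/4 - s²)) cos (2 φ₀ s) ds`, which is odd in `A`
and vanishes at `A = 0`. For `0 < A ≤ 2π` the factor `F(s) = sin (A (1/4 - s²))` decreases to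
`F(1/2) = 0`; integrating by parts against `sin (2 φ₀ s) / (2 φ₀)`, an antiderivative of the cosine
that is positive on `(0, 1/2)` because `|φ₀| < π`, shows that the integral is positive.
-/

open Real

/-- `Y a b c = ∫₀¹ sin(a τ²/2 + b τ + c) dτ` -/
noncomputable def Y (a b c : ℝ) : ℝ := ∫ τ in (0:ℝ)..1, Real.sin (a * τ ^ 2 / 2 + b * τ + c)

open Set intervalIntegral

theorem integral_neg_to_self_eq_integral_add_comp_neg {f : ℝ → ℝ} (hf : Continuous f) (c : ℝ) :
    ∫ x in -c..c, f x = ∫ x in 0..c, (f x + f (-x)) := by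
  have hf_neg : Continuous fun x => f (-x) := hf.comp continuous_neg
  rw [integral_add (hf.intervalIntegrable 0 c) (hf_neg.intervalIntegrable 0 c), integral_comp_neg,
    neg_zero, add_comm, integral_add_adjacent_intervals (hf.intervalIntegrable _ _)
    (hf.intervalIntegrable _ _)]

theorem exists_hasDerivAt_cos_mul_pos {ω c : ℝ} (hω : |ω| * c ≤ π) :
    ∃ S : ℝ → ℝ, S 0 = 0 ∧ (∀ s, HasDerivAt S (cos (ω * s)) s) ∧ ∀ s ∈ Ioo 0 c, 0 < S s := by
  rcases eq_or_ne ω 0 with rfl | hω0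
  · exact ⟨id, rfl, fun s => by simpa using hasDerivAt_id s, fun s hs => hs.1⟩
  refine ⟨fun s => sin (ω * s) / ω, by simp, fun s => ?_, fun s hs => ?_⟩
  · simpa [mul_div_cancel_right₀ _ hω0] using
      (((hasDerivAt_id s).const_mul ω).sin).div_const ω
  · have hωs : |ω * s| < π := by
      rw [abs_mul, abs_of_pos hs.1]
      exact (mul_lt_mul_of_pos_left hs.2 (abs_pos.2 hω0)).trans_le hω
    rcases hω0.lt_or_gt with hneg | hpos
    · exact div_pos_of_neg_of_neg
        (sin_neg_of_neg_of_neg_pi_lt (mul_neg_of_neg_of_pos hneg hs.1) (abs_lt.1 hωs).1) hneg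
    · exact div_pos (sin_pos_of_pos_of_lt_pi (mul_pos hpos hs.1) (abs_lt.1 hωs).2) hpos

theorem integral_mul_cos_pos {F F' : ℝ → ℝ} {c ω : ℝ} (hc : 0 < c) (hω : |ω| * c ≤ π)
    (hF : ∀ s ∈ Icc 0 c, HasDerivAt F (F' s) s) (hF' : ContinuousOn F' (Icc 0 c))
    (hF'_neg : ∀ s ∈ Ioo 0 c, F' s < 0) (hFc : F c = 0) :
    0 < ∫ s in 0..c, F s * cos (ω * s) := by
  obtain ⟨S, hS0, hS, hS_pos⟩ := exists_hasDerivAt_cos_mul_pos hω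
  have hS_cont : Continuous S := continuous_iff_continuousAt.2 fun s => (hS s).continuousAt
  have hF'_int : IntervalIntegrable F' MeasureTheory.volume 0 c :=
    (uIcc_of_le hc.le ▸ hF').intervalIntegrable
  rw [integral_mul_deriv_eq_deriv_mul (fun s hs => hF s (by rwa [uIcc_of_le hc.le] at hs))
    (fun s _ => hS s) hF'_int (by apply Continuous.intervalIntegrable; fun_prop), hFc, hS0,
    zero_mul, mul_zero, sub_zero, zero_sub, neg_pos, ← neg_pos, ← integral_neg]
  refine intervalIntegral_pos_of_pos_on ?_ (fun s hs => ?_) hc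
  · exact (hF'_int.mul_continuousOn hS_cont.continuousOn).neg
  · exact neg_pos.2 (mul_neg_of_neg_of_pos (hF'_neg s hs) (hS_pos s hs))

noncomputable def chirpCosIntegral (A ω : ℝ) : ℝ :=
  ∫ s in (0:ℝ)..1/2, sin (A * (1/4 - s ^ 2)) * cos (ω * s)

theorem chirpCosIntegral_zero_left (ω : ℝ) : chirpCosIntegral 0 ω = 0 := by
  simp [chirpCosIntegral]

theorem chirpCosIntegral_neg_left (A ω : ℝ) :
    chirpCosIntegral (-A) ω = -chirpCosIntegral A ω := by
  simp only [chirpCosIntegral, ← integral_neg, neg_mul, sin_neg]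

theorem chirpCosIntegral_pos {A ω : ℝ} (hA : 0 < A) (hA' : A ≤ 2 * π) (hω : |ω| ≤ 2 * π) :
    0 < chirpCosIntegral A ω := by
  refine integral_mul_cos_pos (F' := fun s => cos (A * (1/4 - s ^ 2)) * (A * -(2 * s)))
    (by norm_num) (by linarith) (fun s _ => ?_) (by fun_prop) (fun s hs => ?_) (by norm_num)
  · convert (((hasDerivAt_pow 2 s).const_sub (1/4)).const_mul A).sin using 2
    norm_num
  · obtain ⟨hs0, hs1⟩ := hs
    have hq : 0 < 1/4 - s ^ 2 := by nlinarith
    have hq' : 1/4 - s ^ 2 < 1/4 := by nlinarith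
    have hphase : A * (1/4 - s ^ 2) ∈ Ioo (-(π / 2)) (π / 2) :=
      ⟨by linarith [mul_pos hA hq, pi_pos], by linarith [mul_lt_mul_of_pos_left hq' hA]⟩
    exact mul_neg_of_pos_of_neg (cos_pos_of_mem_Ioo hphase) (by nlinarith)

theorem chirpCosIntegral_ne_zero {A ω : ℝ} (hA : 0 < |A|) (hA' : |A| ≤ 2 * π)
    (hω : |ω| ≤ 2 * π) : chirpCosIntegral A ω ≠ 0 := by
  rcases lt_abs.1 hA with hpos | hneg
  · exact (chirpCosIntegral_pos hpos (le_abs_self A |>.trans hA') hω).ne'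
  · have := chirpCosIntegral_pos hneg (neg_le_abs A |>.trans hA') hω
    rw [chirpCosIntegral_neg_left] at this
    exact (neg_pos.1 this).ne

theorem Y_eq_neg_two_mul_chirpCosIntegral (A φ : ℝ) :
    Y (2 * A) (-2 * φ - A) φ = -2 * chirpCosIntegral A (2 * φ) := by
  have hshift := integral_comp_add_right
    (fun τ => sin (2 * A * τ ^ 2 / 2 + (-2 * φ - A) * τ + φ)) (a := -(1/2)) (b := 1/2) (1/2)
  norm_num only at hshift
  rw [Y, ← hshift, integral_neg_to_self_eq_integral_add_comp_neg (by fun_prop),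
    chirpCosIntegral, ← integral_const_mul]
  refine integral_congr fun s _ => ?_
  have hphase : ∀ t, 2 * A * (t + 1/2) ^ 2 / 2 + (-2 * φ - A) * (t + 1/2) + φ
      = -(A * (1/4 - t ^ 2)) - 2 * φ * t := fun t => by ring
  rw [hphase, hphase, neg_sq, mul_neg, sub_neg_eq_add, sin_sub, sin_add, sin_neg]
  ring

theorem stmt10 (φ₀ : ℝ) (h0 : -π < φ₀) (h1 : φ₀ < π) :
    Y (2 * 0) (-2 * φ₀ - 0) φ₀ = 0 ∧
    ∀ A : ℝ, 0 < |A| → |A| < 2 * π → Y (2 * A) (-2 * φ₀ - A) φ₀ ≠ 0 := by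
  have hω : |2 * φ₀| ≤ 2 * π := by
    rw [abs_mul, abs_two]
    linarith [abs_lt.2 ⟨h0, h1⟩]
  refine ⟨by rw [Y_eq_neg_two_mul_chirpCosIntegral, chirpCosIntegral_zero_left, mul_zero],
    fun A hA hA' => ?_⟩
  rw [Y_eq_neg_two_mul_chirpCosIntegral]
  exact mul_ne_zero (by norm_num) (chirpCosIntegral_ne_zero hA hA'.le hω)
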